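/- Let r ≥ 1 be an integer, let x_1,…,x_r be complex numbers such that x_j ∉ {0,1,−1} for all j and x_j² ≠ x_k² for j ≠ k, and let α, β, γ be complex numbers with γ ∈ {0, 2}. Then d(x) = 2r − 2(1−α)(1−β) · ∑_{k=1}^r 1/(1 − x_k²). -/
import Mathlib


open Finset

open Polynomial

lemma quad_monic (c : ℂ) : (X ^ 2 + C 4 * X + C c : ℂ[X]).Monic := by monicity!
lemma quad_deg (c : ℂ) : (X ^ 2 + C 4 * X + C c : ℂ[X]).natDegree = 2 := by compute_degree!
lemma quad_next (c : ℂ) : (X ^ 2 + C 4 * X + C c : ℂ[X]).nextCoeff = 4 := by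
  rw [nextCoeff_of_natDegree_pos (by rw [quad_deg]; norm_num), quad_deg]
  simp
lemma sqc_next (c : ℂ) : (X ^ 2 - C c : ℂ[X]).nextCoeff = 0 := by
  rw [nextCoeff_of_natDegree_pos (by rw [natDegree_X_pow_sub_C]; norm_num), natDegree_X_pow_sub_C]
  simp [coeff_X_pow]

lemma derivative_finset_prod {ι : Type*} [DecidableEq ι] (s : Finset ι) (f : ι → ℂ[X]) :
    derivative (∏ i ∈ s, f i) = ∑ i ∈ s, (∏ j ∈ s.erase i, f j) * derivative (f i) := by
  induction s using Finset.induction_on with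
  | empty => simp
  | @insert a s ha ih =>
    have hstep : ∀ i ∈ s, (∏ j ∈ (insert a s).erase i, f j) * derivative (f i)
        = f a * ((∏ j ∈ s.erase i, f j) * derivative (f i)) := by
      intro i hi
      have hia : i ≠ a := fun h => ha (h ▸ hi)
      rw [Finset.erase_insert_of_ne hia.symm,
        Finset.prod_insert (fun h => ha (Finset.mem_of_mem_erase h))]
      ring
    rw [Finset.prod_insert ha, derivative_mul, ih, Finset.sum_insert ha, Finset.erase_insert ha,
      Finset.sum_congr rfl hstep, ← Finset.mul_sum]
    ring

theorem gamma_two (r : ℕ) (hr : 1 ≤ r) (x : Fin r → ℂ)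
    (hx0 : ∀ j, x j ≠ 0) (hx1 : ∀ j, x j ≠ 1) (hxm1 : ∀ j, x j ≠ -1)
    (hxx : ∀ j k : Fin r, j ≠ k → (x j) ^ 2 ≠ (x k) ^ 2) (α β : ℂ) :
    (∑ k : Fin r,
      (((x k + α) * (x k + β)) / (x k * (x k + 1)) *
          ∏ j ∈ univ.erase k, ((x k + 2) ^ 2 - (x j) ^ 2) / ((x k) ^ 2 - (x j) ^ 2)
        + ((x k - α) * (x k - β)) / (x k * (x k - 1)) *
          ∏ j ∈ univ.erase k, ((x k - 2) ^ 2 - (x j) ^ 2) / ((x k) ^ 2 - (x j) ^ 2)))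
      = 2 * r - 2 * (1 - α) * (1 - β) * ∑ k : Fin r, 1 / (1 - (x k) ^ 2) := by
  -- basic scalar nonvanishing facts
  have h1 : ∀ k, x k + 1 ≠ 0 := fun k h => hxm1 k (by linear_combination h)
  have h2 : ∀ k, x k - 1 ≠ 0 := fun k => sub_ne_zero.mpr (hx1 k)
  have hsq : ∀ k, 1 - x k ^ 2 ≠ 0 := by
    intro k h
    have : (x k - 1) * (x k + 1) = 0 := by linear_combination -h
    rcases mul_eq_zero.mp this with h' | h'
    · exact h2 k h'
    · exact h1 k h'
  have hD : ∀ k : Fin r, (∏ j ∈ univ.erase k, ((x k) ^ 2 - (x j) ^ 2)) ≠ 0 := by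
    intro k
    refine Finset.prod_ne_zero_iff.mpr fun j hj => sub_ne_zero.mpr ?_
    exact fun h => hxx j k (Finset.ne_of_mem_erase hj) h.symm
  have hxinj : Function.Injective x := by
    intro i j h
    by_contra hne
    exact hxx i j hne (by rw [h])
  set S₁ : ℂ := ∑ k : Fin r, 1 / (1 - (x k) ^ 2) with hS₁
  set Pi : ℂ := ∏ j : Fin r, (1 - (x j) ^ 2) with hPi
  have hPine : Pi ≠ 0 := Finset.prod_ne_zero_iff.mpr fun j _ => hsq j
  set E : ℂ := ∑ j : Fin r, ∏ i ∈ univ.erase j, (1 - (x i) ^ 2) with hE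
  have hEPi : E = Pi * S₁ := by
    rw [hE, hPi, hS₁, Finset.mul_sum]
    refine Finset.sum_congr rfl fun j _ => ?_
    rw [← Finset.mul_prod_erase univ _ (mem_univ j), mul_comm (1 - x j ^ 2),
      mul_assoc, one_div, mul_inv_cancel₀ (hsq j), mul_one]
  set C1 : ℂ := (α + β - 2) / 2 + 2 * (α - 1) * (β - 1) * S₁ with hC1
  set C2 : ℂ := (α - 1) * (β - 1) / 2 with hC2
  set A : Fin r → ℂ := fun k => ((x k + α) * (x k + β)) / (x k * (x k + 1)) *
      ∏ j ∈ univ.erase k, ((x k + 2) ^ 2 - (x j) ^ 2) / ((x k) ^ 2 - (x j) ^ 2) with hA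
  set B : Fin r → ℂ := fun k => ((x k - α) * (x k - β)) / (x k * (x k - 1)) *
      ∏ j ∈ univ.erase k, ((x k - 2) ^ 2 - (x j) ^ 2) / ((x k) ^ 2 - (x j) ^ 2) with hB
  -- polynomials
  set P : ℂ[X] := ∏ j : Fin r, (X ^ 2 - C ((x j) ^ 2)) with hP
  set P2 : ℂ[X] := ∏ j : Fin r, (X ^ 2 + C 4 * X + C (4 - (x j) ^ 2)) with hP2
  set Pp : Fin r → ℂ[X] := fun k => (X + C (x k)) * ∏ j ∈ univ.erase k, (X ^ 2 - C ((x j) ^ 2)) with hPp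
  set Pm : Fin r → ℂ[X] := fun k => (X - C (x k)) * ∏ j ∈ univ.erase k, (X ^ 2 - C ((x j) ^ 2)) with hPm
  set Δ : ℂ[X] := (X + C α) * (X + C β) * P2 - (X + C 1) ^ 2 * P
      - C (2 * C1) * ((X + C 1) * P) - C (2 * C2) * P
      - (∑ k : Fin r, C (2 * A k) * ((X + C 1) ^ 2 * Pp k))
      - (∑ k : Fin r, C (2 * B k) * ((X + C 1) ^ 2 * Pm k)) with hΔ
  -- monicity and degrees
  have hfm : ∀ j : Fin r, (X ^ 2 - C ((x j) ^ 2) : ℂ[X]).Monic := fun j =>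
    monic_X_pow_sub_C _ (by norm_num)
  have hPmonic : P.Monic := monic_prod_of_monic _ _ fun j _ => hfm j
  have hP2monic : P2.Monic := monic_prod_of_monic _ _ fun j _ => quad_monic _
  have hPdeg : P.natDegree = 2 * r := by
    rw [hP, natDegree_prod_of_monic _ _ fun j _ => hfm j,
      Finset.sum_congr rfl fun j _ => natDegree_X_pow_sub_C]
    simp [mul_comm]
  have hP2deg : P2.natDegree = 2 * r := by
    rw [hP2, natDegree_prod_of_monic _ _ fun j _ => quad_monic _,
      Finset.sum_congr rfl fun j _ => quad_deg _]
    simp [mul_comm]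
  have hPnext : P.nextCoeff = 0 := by
    rw [hP, Monic.nextCoeff_prod _ _ fun j _ => hfm j,
      Finset.sum_congr rfl fun j _ => sqc_next _]
    simp
  have hP2next : P2.nextCoeff = 4 * r := by
    rw [hP2, Monic.nextCoeff_prod _ _ fun j _ => quad_monic _,
      Finset.sum_congr rfl fun j _ => quad_next _]
    simp [mul_comm]
  have herasedeg : ∀ k : Fin r,
      (∏ j ∈ univ.erase k, (X ^ 2 - C ((x j) ^ 2) : ℂ[X])).natDegree = 2 * (r - 1) := by
    intro k
    rw [natDegree_prod_of_monic _ _ fun j _ => hfm j,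
      Finset.sum_congr rfl fun j _ => natDegree_X_pow_sub_C]
    simp [Finset.card_erase_of_mem, mul_comm]
  have hPpmonic : ∀ k, (Pp k).Monic := fun k =>
    (monic_X_add_C _).mul (monic_prod_of_monic _ _ fun j _ => hfm j)
  have hPmmonic : ∀ k, (Pm k).Monic := fun k =>
    (monic_X_sub_C _).mul (monic_prod_of_monic _ _ fun j _ => hfm j)
  have hPpdeg : ∀ k, (Pp k).natDegree = 2 * r - 1 := by
    intro k
    rw [hPp]
    rw [(monic_X_add_C _).natDegree_mul (monic_prod_of_monic _ _ fun j _ => hfm j),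
      herasedeg k, natDegree_X_add_C]
    omega
  have hPmdeg : ∀ k, (Pm k).natDegree = 2 * r - 1 := by
    intro k
    rw [hPm]
    rw [(monic_X_sub_C _).natDegree_mul (monic_prod_of_monic _ _ fun j _ => hfm j),
      herasedeg k, natDegree_X_sub_C]
    omega
  -- the six terms
  have hT1monic : ((X + C α) * (X + C β) * P2).Monic :=
    ((monic_X_add_C _).mul (monic_X_add_C _)).mul hP2monic
  have hT1deg : ((X + C α) * (X + C β) * P2).natDegree = 2 * r + 2 := by
    rw [((monic_X_add_C _).mul (monic_X_add_C _)).natDegree_mul hP2monic,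
      (monic_X_add_C _).natDegree_mul (monic_X_add_C _), natDegree_X_add_C,
      natDegree_X_add_C, hP2deg]
    omega
  have hT1next : ((X + C α) * (X + C β) * P2).nextCoeff = α + β + 4 * r := by
    rw [((monic_X_add_C _).mul (monic_X_add_C _)).nextCoeff_mul hP2monic,
      (monic_X_add_C _).nextCoeff_mul (monic_X_add_C _), nextCoeff_X_add_C,
      nextCoeff_X_add_C, hP2next]
  have hT2monic : ((X + C 1 : ℂ[X]) ^ 2 * P).Monic := ((monic_X_add_C _).pow 2).mul hPmonic
  have hT2deg : ((X + C 1 : ℂ[X]) ^ 2 * P).natDegree = 2 * r + 2 := by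
    rw [((monic_X_add_C _).pow 2).natDegree_mul hPmonic, natDegree_pow, natDegree_X_add_C, hPdeg]
    omega
  have hT2next : ((X + C 1 : ℂ[X]) ^ 2 * P).nextCoeff = 2 := by
    rw [((monic_X_add_C _).pow 2).nextCoeff_mul hPmonic, (monic_X_add_C _).nextCoeff_pow,
      nextCoeff_X_add_C, hPnext]
    simp
  have hT3monic : ((X + C 1 : ℂ[X]) * P).Monic := (monic_X_add_C _).mul hPmonic
  have hT3deg : ((X + C 1 : ℂ[X]) * P).natDegree = 2 * r + 1 := by
    rw [(monic_X_add_C _).natDegree_mul hPmonic, natDegree_X_add_C, hPdeg]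
    omega
  have hT5monic : ∀ k, ((X + C 1 : ℂ[X]) ^ 2 * Pp k).Monic := fun k =>
    ((monic_X_add_C _).pow 2).mul (hPpmonic k)
  have hT5deg : ∀ k, ((X + C 1 : ℂ[X]) ^ 2 * Pp k).natDegree = 2 * r + 1 := by
    intro k
    rw [((monic_X_add_C _).pow 2).natDegree_mul (hPpmonic k), natDegree_pow,
      natDegree_X_add_C, hPpdeg k]
    omega
  have hT6monic : ∀ k, ((X + C 1 : ℂ[X]) ^ 2 * Pm k).Monic := fun k =>
    ((monic_X_add_C _).pow 2).mul (hPmmonic k)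
  have hT6deg : ∀ k, ((X + C 1 : ℂ[X]) ^ 2 * Pm k).natDegree = 2 * r + 1 := by
    intro k
    rw [((monic_X_add_C _).pow 2).natDegree_mul (hPmmonic k), natDegree_pow,
      natDegree_X_add_C, hPmdeg k]
    omega
  -- degree bound on Δ
  have hcoefftop : ∀ N, 2 * r + 2 ≤ N → Δ.coeff N = 0 := by
    intro N hN
    have e1 : ((X + C α) * (X + C β) * P2).coeff N = if N = 2 * r + 2 then 1 else 0 := by
      split_ifs with h
      · subst h; rw [← hT1deg]; exact hT1monic.coeff_natDegree
      · exact coeff_eq_zero_of_natDegree_lt (by rw [hT1deg]; omega)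
    have e2 : ((X + C 1 : ℂ[X]) ^ 2 * P).coeff N = if N = 2 * r + 2 then 1 else 0 := by
      split_ifs with h
      · subst h; rw [← hT2deg]; exact hT2monic.coeff_natDegree
      · exact coeff_eq_zero_of_natDegree_lt (by rw [hT2deg]; omega)
    have e3 : (C (2 * C1) * ((X + C 1) * P)).coeff N = 0 := by
      refine coeff_eq_zero_of_natDegree_lt (lt_of_le_of_lt (natDegree_C_mul_le _ _) ?_)
      rw [hT3deg]; omega
    have e4 : (C (2 * C2) * P).coeff N = 0 := by
      refine coeff_eq_zero_of_natDegree_lt (lt_of_le_of_lt (natDegree_C_mul_le _ _) ?_)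
      rw [hPdeg]; omega
    have e5 : (∑ k : Fin r, C (2 * A k) * ((X + C 1) ^ 2 * Pp k)).coeff N = 0 := by
      rw [finset_sum_coeff]
      refine Finset.sum_eq_zero fun k _ => ?_
      refine coeff_eq_zero_of_natDegree_lt (lt_of_le_of_lt (natDegree_C_mul_le _ _) ?_)
      rw [hT5deg k]; omega
    have e6 : (∑ k : Fin r, C (2 * B k) * ((X + C 1) ^ 2 * Pm k)).coeff N = 0 := by
      rw [finset_sum_coeff]
      refine Finset.sum_eq_zero fun k _ => ?_
      refine coeff_eq_zero_of_natDegree_lt (lt_of_le_of_lt (natDegree_C_mul_le _ _) ?_)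
      rw [hT6deg k]; omega
    rw [hΔ]
    simp only [coeff_sub, e1, e2, e3, e4, e5, e6]
    split_ifs <;> ring
  have hΔdeg : Δ.natDegree ≤ 2 * r + 1 :=
    natDegree_le_iff_coeff_eq_zero.mpr fun N hN => hcoefftop N (by omega)
  -- the key coefficient identity
  have hkey : Δ.coeff (2 * r + 1) =
      (α + β + 4 * r) - 2 - 2 * C1 - (∑ k : Fin r, 2 * A k) - (∑ k : Fin r, 2 * B k) := by
    have e1 : ((X + C α) * (X + C β) * P2).coeff (2 * r + 1) = α + β + 4 * r := by
      have : (2 * r + 1) = ((X + C α) * (X + C β) * P2).natDegree - 1 := by rw [hT1deg]; omega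
      rw [this, ← nextCoeff_of_natDegree_pos (by rw [hT1deg]; omega), hT1next]
    have e2 : ((X + C 1 : ℂ[X]) ^ 2 * P).coeff (2 * r + 1) = 2 := by
      have : (2 * r + 1) = ((X + C 1 : ℂ[X]) ^ 2 * P).natDegree - 1 := by rw [hT2deg]; omega
      rw [this, ← nextCoeff_of_natDegree_pos (by rw [hT2deg]; omega), hT2next]
    have e3 : (C (2 * C1) * ((X + C 1) * P)).coeff (2 * r + 1) = 2 * C1 := by
      rw [coeff_C_mul, ← hT3deg, hT3monic.coeff_natDegree, mul_one]
    have e4 : (C (2 * C2) * P).coeff (2 * r + 1) = 0 := by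
      rw [coeff_C_mul, coeff_eq_zero_of_natDegree_lt (by rw [hPdeg]; omega), mul_zero]
    have e5 : (∑ k : Fin r, C (2 * A k) * ((X + C 1) ^ 2 * Pp k)).coeff (2 * r + 1)
        = ∑ k : Fin r, 2 * A k := by
      rw [finset_sum_coeff]
      refine Finset.sum_congr rfl fun k _ => ?_
      rw [coeff_C_mul, ← hT5deg k, (hT5monic k).coeff_natDegree, mul_one]
    have e6 : (∑ k : Fin r, C (2 * B k) * ((X + C 1) ^ 2 * Pm k)).coeff (2 * r + 1)
        = ∑ k : Fin r, 2 * B k := by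
      rw [finset_sum_coeff]
      refine Finset.sum_congr rfl fun k _ => ?_
      rw [coeff_C_mul, ← hT6deg k, (hT6monic k).coeff_natDegree, mul_one]
    rw [hΔ]
    simp only [coeff_sub, e1, e2, e3, e4, e5, e6]
    ring
  -- evaluation helpers
  have hevalP : ∀ z : ℂ, P.eval z = ∏ j : Fin r, (z ^ 2 - (x j) ^ 2) := by
    intro z; rw [hP, eval_prod]; exact Finset.prod_congr rfl fun j _ => by simp
  have hevalP2 : ∀ z : ℂ, P2.eval z = ∏ j : Fin r, (z ^ 2 + 4 * z + (4 - (x j) ^ 2)) := by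
    intro z; rw [hP2, eval_prod]; exact Finset.prod_congr rfl fun j _ => by simp
  have hevalErase : ∀ (k : Fin r) (z : ℂ),
      (∏ j ∈ univ.erase k, (X ^ 2 - C ((x j) ^ 2) : ℂ[X])).eval z
        = ∏ j ∈ univ.erase k, (z ^ 2 - (x j) ^ 2) := by
    intro k z; rw [eval_prod]; exact Finset.prod_congr rfl fun j _ => by simp
  have hevalPp : ∀ (m : Fin r) (z : ℂ),
      (Pp m).eval z = (z + x m) * ∏ j ∈ univ.erase m, (z ^ 2 - (x j) ^ 2) := by
    intro m z; simp only [hPp, eval_mul, eval_add, eval_X, eval_C, hevalErase]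
  have hevalPm : ∀ (m : Fin r) (z : ℂ),
      (Pm m).eval z = (z - x m) * ∏ j ∈ univ.erase m, (z ^ 2 - (x j) ^ 2) := by
    intro m z; simp only [hPm, eval_mul, eval_sub, eval_X, eval_C, hevalErase]
  have hPpz : ∀ (m k : Fin r), m ≠ k → (Pp m).eval (x k) = 0 ∧ (Pp m).eval (-(x k)) = 0 := by
    intro m k hmk
    have hk : k ∈ univ.erase m := Finset.mem_erase.mpr ⟨fun h => hmk h.symm, mem_univ k⟩
    constructor <;>
      · rw [hevalPp]
        rw [Finset.prod_eq_zero hk (by ring), mul_zero]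
  have hPmz : ∀ (m k : Fin r), m ≠ k → (Pm m).eval (x k) = 0 ∧ (Pm m).eval (-(x k)) = 0 := by
    intro m k hmk
    have hk : k ∈ univ.erase m := Finset.mem_erase.mpr ⟨fun h => hmk h.symm, mem_univ k⟩
    constructor <;>
      · rw [hevalPm]
        rw [Finset.prod_eq_zero hk (by ring), mul_zero]
  -- roots at x k
  have hrootp : ∀ k, Δ.eval (x k) = 0 := by
    intro k
    have hPz : P.eval (x k) = 0 := by
      rw [hevalP]; exact Finset.prod_eq_zero (mem_univ k) (by ring)
    have hs1 : (∑ m : Fin r, 2 * A m * ((x k + 1) ^ 2 * (Pp m).eval (x k)))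
        = 2 * A k * ((x k + 1) ^ 2 * ((x k + x k) * ∏ j ∈ univ.erase k, ((x k) ^ 2 - (x j) ^ 2))) := by
      rw [Finset.sum_eq_single k (fun m _ hmk => by rw [(hPpz m k hmk).1]; ring)
        (fun h => absurd (mem_univ k) h), hevalPp]
    have hs2 : (∑ m : Fin r, 2 * B m * ((x k + 1) ^ 2 * (Pm m).eval (x k))) = 0 := by
      refine Finset.sum_eq_zero fun m _ => ?_
      rcases eq_or_ne m k with h | h
      · subst h; rw [hevalPm]; ring
      · rw [(hPmz m k h).1]; ring
    have hAk : A k = ((x k + α) * (x k + β) * ∏ j ∈ univ.erase k, ((x k + 2) ^ 2 - (x j) ^ 2))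
        / (x k * (x k + 1) * ∏ j ∈ univ.erase k, ((x k) ^ 2 - (x j) ^ 2)) := by
      simp only [hA]
      rw [Finset.prod_div_distrib, div_mul_div_comm]
    have hprod : (∏ j : Fin r, ((x k) ^ 2 + 4 * (x k) + (4 - (x j) ^ 2)))
        = (4 * (x k) + 4) * ∏ j ∈ univ.erase k, ((x k + 2) ^ 2 - (x j) ^ 2) := by
      rw [← Finset.mul_prod_erase univ _ (mem_univ k),
        show (x k) ^ 2 + 4 * x k + (4 - (x k) ^ 2) = 4 * x k + 4 by ring]
      exact congrArg _ (Finset.prod_congr rfl fun j _ => by ring)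
    have key : (x k + α) * (x k + β) * (∏ j : Fin r, ((x k) ^ 2 + 4 * (x k) + (4 - (x j) ^ 2)))
        = 2 * A k * ((x k + 1) ^ 2 * ((x k + x k) * ∏ j ∈ univ.erase k, ((x k) ^ 2 - (x j) ^ 2))) := by
      rw [hprod, hAk]
      field_simp [hx0 k, h1 k, hD k]
      ring
    rw [hΔ]
    simp only [eval_sub, eval_mul, eval_add, eval_pow, eval_X, eval_C, eval_finset_sum]
    rw [hPz, hs1, hs2, hevalP2]
    linear_combination key
  -- roots at -(x k)
  have hrootm : ∀ k, Δ.eval (-(x k)) = 0 := by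
    intro k
    have hPz : P.eval (-(x k)) = 0 := by
      rw [hevalP]; exact Finset.prod_eq_zero (mem_univ k) (by ring)
    have hs1 : (∑ m : Fin r, 2 * A m * ((-(x k) + 1) ^ 2 * (Pp m).eval (-(x k)))) = 0 := by
      refine Finset.sum_eq_zero fun m _ => ?_
      rcases eq_or_ne m k with h | h
      · subst h; rw [hevalPp]; ring
      · rw [(hPpz m k h).2]; ring
    have hs2 : (∑ m : Fin r, 2 * B m * ((-(x k) + 1) ^ 2 * (Pm m).eval (-(x k))))
        = 2 * B k * ((-(x k) + 1) ^ 2 * ((-(x k) - x k) * ∏ j ∈ univ.erase k, ((x k) ^ 2 - (x j) ^ 2))) := by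
      rw [Finset.sum_eq_single k (fun m _ hmk => by rw [(hPmz m k hmk).2]; ring)
        (fun h => absurd (mem_univ k) h), hevalPm]
      have : ∀ j : Fin r, (-(x k)) ^ 2 - (x j) ^ 2 = (x k) ^ 2 - (x j) ^ 2 := fun j => by ring
      rw [Finset.prod_congr rfl fun j _ => this j]
    have hBk : B k = ((x k - α) * (x k - β) * ∏ j ∈ univ.erase k, ((x k - 2) ^ 2 - (x j) ^ 2))
        / (x k * (x k - 1) * ∏ j ∈ univ.erase k, ((x k) ^ 2 - (x j) ^ 2)) := by
      simp only [hB]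
      rw [Finset.prod_div_distrib, div_mul_div_comm]
    have hprod : (∏ j : Fin r, ((-(x k)) ^ 2 + 4 * (-(x k)) + (4 - (x j) ^ 2)))
        = (4 - 4 * (x k)) * ∏ j ∈ univ.erase k, ((x k - 2) ^ 2 - (x j) ^ 2) := by
      rw [← Finset.mul_prod_erase univ _ (mem_univ k),
        show (-(x k)) ^ 2 + 4 * (-(x k)) + (4 - (x k) ^ 2) = 4 - 4 * x k by ring]
      exact congrArg _ (Finset.prod_congr rfl fun j _ => by ring)
    have key : (-(x k) + α) * (-(x k) + β)
          * (∏ j : Fin r, ((-(x k)) ^ 2 + 4 * (-(x k)) + (4 - (x j) ^ 2)))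
        = 2 * B k * ((-(x k) + 1) ^ 2 * ((-(x k) - x k) * ∏ j ∈ univ.erase k, ((x k) ^ 2 - (x j) ^ 2))) := by
      rw [hprod, hBk]
      field_simp [hx0 k, h2 k, hD k]
      ring
    rw [hΔ]
    simp only [eval_sub, eval_mul, eval_add, eval_pow, eval_X, eval_C, eval_finset_sum]
    rw [hPz, hs1, hs2, hevalP2]
    linear_combination key
  -- value at -1
  have hPm1 : P.eval (-1) = Pi := by
    rw [hevalP, hPi]; exact Finset.prod_congr rfl fun j _ => by ring
  have hP2m1 : P2.eval (-1) = Pi := by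
    rw [hevalP2, hPi]; exact Finset.prod_congr rfl fun j _ => by ring
  have hΔm1 : Δ.eval (-1) = 0 := by
    rw [hΔ]
    simp only [eval_sub, eval_mul, eval_add, eval_pow, eval_X, eval_C, eval_finset_sum]
    rw [hPm1, hP2m1, show (-1 : ℂ) + 1 = 0 by ring]
    simp only [ne_eq, OfNat.ofNat_ne_zero, not_false_eq_true, zero_pow, mul_zero, zero_mul,
      sub_zero, Finset.sum_const_zero]
    rw [hC2]
    ring
  -- derivative at -1
  have hPder : P.derivative.eval (-1) = -2 * E := by
    rw [hP, derivative_finset_prod]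
    simp only [derivative_sub, derivative_X_pow, derivative_C, sub_zero, eval_finset_sum,
      eval_mul, eval_prod, eval_sub, eval_pow, eval_X, eval_C]
    rw [hE, Finset.mul_sum]
    refine Finset.sum_congr rfl fun j _ => ?_
    rw [Finset.prod_congr rfl fun i (_ : i ∈ univ.erase j) => show ((-1 : ℂ))^2 - x i ^ 2 = 1 - x i ^2 by ring]
    push_cast
    ring
  have hP2der : P2.derivative.eval (-1) = 2 * E := by
    rw [hP2, derivative_finset_prod]
    simp only [derivative_add, derivative_mul, derivative_X_pow, derivative_C, derivative_X,
      eval_finset_sum, eval_mul, eval_prod, eval_add, eval_sub, eval_pow, eval_X, eval_C, eval_one]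
    rw [hE, Finset.mul_sum]
    refine Finset.sum_congr rfl fun j _ => ?_
    rw [Finset.prod_congr rfl fun i (_ : i ∈ univ.erase j) =>
      show ((-1 : ℂ))^2 + 4 * (-1) + (4 - x i ^ 2) = 1 - x i ^2 by ring]
    push_cast
    ring
  have hΔder : Δ.derivative.eval (-1) = 0 := by
    rw [hΔ]
    simp only [derivative_sub, derivative_mul, derivative_sum, derivative_C_mul, derivative_pow,
      derivative_X_add_C, derivative_one, derivative_C, eval_sub, eval_mul, eval_add, eval_pow,
      eval_X, eval_C, eval_one, eval_finset_sum, mul_one, one_mul]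
    rw [hPm1, hP2m1, hPder, hP2der, show (-1 : ℂ) + 1 = 0 by ring]
    simp only [ne_eq, OfNat.ofNat_ne_zero, not_false_eq_true, zero_pow, mul_zero, zero_mul,
      mul_one, add_zero, zero_add, sub_zero, Finset.sum_const_zero]
    simp only [eval_zero, mul_zero, neg_zero, Finset.sum_const_zero, sub_zero, add_zero, zero_add,
      zero_sub, neg_neg]
    rw [hC1, hC2, hEPi]
    ring_nf
    simp
  -- Δ = (X + C 1) * Q
  have hdvd : (X - Polynomial.C (-1 : ℂ)) ∣ Δ := dvd_iff_isRoot.mpr hΔm1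
  have hXC : (X - Polynomial.C (-1 : ℂ)) = X + Polynomial.C 1 := by
    rw [map_neg, sub_neg_eq_add]
  obtain ⟨Q, hQ⟩ := hdvd
  rw [hXC] at hQ
  have hQx : ∀ k, Q.eval (x k) = 0 := by
    intro k
    have h := hrootp k
    rw [hQ, eval_mul, eval_add, eval_X, eval_C] at h
    exact (mul_eq_zero.mp h).resolve_left (h1 k)
  have hQmx : ∀ k, Q.eval (-(x k)) = 0 := by
    intro k
    have h := hrootm k
    rw [hQ, eval_mul, eval_add, eval_X, eval_C] at h
    rcases mul_eq_zero.mp h with h' | h'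
    · exact absurd (show x k = 1 by linear_combination -h') (hx1 k)
    · exact h'
  have hQm1 : Q.eval (-1) = 0 := by
    have hD' : Δ.derivative = Q + (X + Polynomial.C 1) * Q.derivative := by
      rw [hQ, derivative_mul, derivative_X_add_C, one_mul]
    have h := hΔder
    rw [hD', eval_add, eval_mul, eval_add, eval_X, eval_C] at h
    simpa using h
  have hQ0 : Q = 0 := by
    rcases eq_or_ne Q 0 with h | hne
    · exact h
    have hdQ : Q.natDegree ≤ 2 * r := by
      have hd := hΔdeg
      rw [hQ, natDegree_mul (monic_X_add_C (1:ℂ)).ne_zero hne, natDegree_X_add_C] at hd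
      omega
    refine Polynomial.eq_zero_of_natDegree_lt_card_of_eval_eq_zero' Q
      (insert (-1) ((univ.image x) ∪ (univ.image fun j => -(x j)))) ?_ ?_
    · intro a ha
      rcases Finset.mem_insert.mp ha with rfl | ha
      · exact hQm1
      rcases Finset.mem_union.mp ha with ha | ha
      · obtain ⟨k, _, rfl⟩ := Finset.mem_image.mp ha; exact hQx k
      · obtain ⟨k, _, rfl⟩ := Finset.mem_image.mp ha; exact hQmx k
    · have hc1 : (univ.image x).card = r := by
        rw [Finset.card_image_of_injective _ hxinj, card_univ, Fintype.card_fin]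
      have hinj2 : Function.Injective fun j => -(x j) := fun i j hij => hxinj (neg_injective hij)
      have hc2 : (univ.image fun j => -(x j)).card = r := by
        rw [Finset.card_image_of_injective _ hinj2, card_univ, Fintype.card_fin]
      have hdisj : Disjoint (univ.image x) (univ.image fun j => -(x j)) := by
        rw [Finset.disjoint_left]
        intro a ha hb
        obtain ⟨i, _, rfl⟩ := Finset.mem_image.mp ha
        obtain ⟨j, _, hj⟩ := Finset.mem_image.mp hb
        have hsqeq : x j ^ 2 = x i ^ 2 := by
          have : -(x j) = x i := hj
          linear_combination (x i - x j) * this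
        rcases eq_or_ne j i with rfl | hne2
        · exact hx0 j (by linear_combination (-1/2 : ℂ) * hj)
        · exact hxx j i hne2 hsqeq
      have hnotin : (-1 : ℂ) ∉ (univ.image x) ∪ (univ.image fun j => -(x j)) := by
        intro h
        rcases Finset.mem_union.mp h with h | h
        · obtain ⟨k, _, hk⟩ := Finset.mem_image.mp h; exact hxm1 k hk
        · obtain ⟨k, _, hk⟩ := Finset.mem_image.mp h
          exact hx1 k (by linear_combination -hk)
      rw [Finset.card_insert_of_notMem hnotin, Finset.card_union_of_disjoint hdisj, hc1, hc2]
      omega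
  have hΔ0 : Δ = 0 := by rw [hQ, hQ0, mul_zero]
  have h0 := hkey
  rw [hΔ0, coeff_zero] at h0
  have hgoal : (∑ k : Fin r, (A k + B k)) = 2 * r - 2 * (1 - α) * (1 - β) * S₁ := by
    rw [Finset.sum_add_distrib]
    rw [← Finset.mul_sum, ← Finset.mul_sum] at h0
    linear_combination (1/2 : ℂ) * h0 - hC1
  exact hgoal

theorem dx_formula_gamma_zero_or_two (r : ℕ) (hr : 1 ≤ r) (x : Fin r → ℂ)
    (hx0 : ∀ j, x j ≠ 0) (hx1 : ∀ j, x j ≠ 1) (hxm1 : ∀ j, x j ≠ -1)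
    (hxx : ∀ j k : Fin r, j ≠ k → (x j) ^ 2 ≠ (x k) ^ 2)
    (α β γ : ℂ) (hγ : γ = 0 ∨ γ = 2) :
    (∑ k : Fin r,
      (((x k + α) * (x k + β)) / (x k * (x k + 1)) *
          ∏ j ∈ univ.erase k, ((x k + γ) ^ 2 - (x j) ^ 2) / ((x k) ^ 2 - (x j) ^ 2)
        + ((x k - α) * (x k - β)) / (x k * (x k - 1)) *
          ∏ j ∈ univ.erase k, ((x k - γ) ^ 2 - (x j) ^ 2) / ((x k) ^ 2 - (x j) ^ 2)))
      = 2 * r - 2 * (1 - α) * (1 - β) * ∑ k : Fin r, 1 / (1 - (x k) ^ 2) := by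
  rcases hγ with rfl | rfl
  · -- γ = 0 : the products are 1 and the identity is pointwise
    have h1 : ∀ k, x k + 1 ≠ 0 := fun k h => hxm1 k (by linear_combination h)
    have h2 : ∀ k, x k - 1 ≠ 0 := fun k => sub_ne_zero.mpr (hx1 k)
    have hsq : ∀ k, 1 - x k ^ 2 ≠ 0 := by
      intro k h
      have : (x k - 1) * (x k + 1) = 0 := by linear_combination -h
      rcases mul_eq_zero.mp this with h' | h'
      · exact h2 k h'
      · exact h1 k h'
    have hterm : ∀ k : Fin r,
        (((x k + α) * (x k + β)) / (x k * (x k + 1)) *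
          ∏ j ∈ univ.erase k, ((x k + 0) ^ 2 - (x j) ^ 2) / ((x k) ^ 2 - (x j) ^ 2)
        + ((x k - α) * (x k - β)) / (x k * (x k - 1)) *
          ∏ j ∈ univ.erase k, ((x k - 0) ^ 2 - (x j) ^ 2) / ((x k) ^ 2 - (x j) ^ 2))
        = 2 - 2 * (1 - α) * (1 - β) * (1 / (1 - (x k) ^ 2)) := by
      intro k
      have hne : ∀ j ∈ univ.erase k, (x k) ^ 2 - (x j) ^ 2 ≠ 0 := fun j hj =>
        sub_ne_zero.mpr fun h => hxx j k (Finset.ne_of_mem_erase hj) h.symm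
      have hp1 : (∏ j ∈ univ.erase k, ((x k + 0) ^ 2 - (x j) ^ 2) / ((x k) ^ 2 - (x j) ^ 2)) = 1 := by
        refine Finset.prod_eq_one fun j hj => ?_
        rw [show (x k + 0) ^ 2 - (x j) ^ 2 = (x k) ^ 2 - (x j) ^ 2 by ring]
        exact div_self (hne j hj)
      have hp2 : (∏ j ∈ univ.erase k, ((x k - 0) ^ 2 - (x j) ^ 2) / ((x k) ^ 2 - (x j) ^ 2)) = 1 := by
        refine Finset.prod_eq_one fun j hj => ?_
        rw [show (x k - 0) ^ 2 - (x j) ^ 2 = (x k) ^ 2 - (x j) ^ 2 by ring]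
        exact div_self (hne j hj)
      rw [hp1, hp2, mul_one, mul_one]
      field_simp [hx0 k, h1 k, h2 k, hsq k]
      ring
    rw [Finset.sum_congr rfl fun k _ => hterm k, Finset.sum_sub_distrib, ← Finset.mul_sum,
      Finset.sum_const, card_univ, Fintype.card_fin, nsmul_eq_mul]
    ring
  · exact gamma_two r hr x hx0 hx1 hxm1 hxx α β
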